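/- arXiv:1111.3517 — 2 statements merged into one kernel-verified Lean document; each statement's English description precedes it below -/
import Mathlib

section
/- A graph G is Roman (i.e., γ_R(G) = 2γ(G)) if and only if there exists a minimum-weight Roman dominating function f = (A_0, A_1, A_2) on G with A_1 = ∅. -/
open Finset

/-- A set `S` is a dominating set of `G` if every vertex outside `S` has a neighbor in `S`. -/
def IsDominatingSet {V : Type*} (G : SimpleGraph V) (S : Set V) : Prop :=
  ∀ v, v ∉ S → ∃ u ∈ S, G.Adj u v

/-- The domination number `γ(G)`. -/
noncomputable def domNum {V : Type*} [Fintype V] (G : SimpleGraph V) : ℕ :=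
  sInf {n | ∃ S : Finset V, IsDominatingSet G ↑S ∧ S.card = n}

/-- A Roman dominating function: values in {0,1,2}, every vertex of value 0 has a
neighbor of value 2. -/
def IsRDF {V : Type*} (G : SimpleGraph V) (f : V → ℕ) : Prop :=
  (∀ v, f v ≤ 2) ∧ ∀ v, f v = 0 → ∃ u, G.Adj u v ∧ f u = 2

/-- The Roman domination number `γ_R(G)`. -/
noncomputable def romanDomNum {V : Type*} [Fintype V] (G : SimpleGraph V) : ℕ :=
  sInf {n | ∃ f : V → ℕ, IsRDF G f ∧ ∑ v, f v = n}

/-- The strong product of graphs. -/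
def strongProd {V W : Type*} (G : SimpleGraph V) (H : SimpleGraph W) :
    SimpleGraph (V × W) where
  Adj x y := x ≠ y ∧ (x.1 = y.1 ∨ G.Adj x.1 y.1) ∧ (x.2 = y.2 ∨ H.Adj x.2 y.2)
  symm := ⟨fun x y => by
    rintro ⟨h, h1, h2⟩
    refine ⟨h.symm, ?_, ?_⟩
    · cases h1 with
      | inl h => exact Or.inl h.symm
      | inr h => exact Or.inr h.symm
    · cases h2 with
      | inl h => exact Or.inl h.symm
      | inr h => exact Or.inr h.symm⟩
  loopless := ⟨fun x => by simp⟩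

/-- `G` has an efficient dominating set: a dominating set whose elements have
pairwise disjoint closed neighborhoods. -/
def HasEfficientDomSet {V : Type*} (G : SimpleGraph V) : Prop :=
  ∃ S : Finset V, IsDominatingSet G ↑S ∧
    ∀ u ∈ S, ∀ v ∈ S, u ≠ v →
      Disjoint (insert u (G.neighborSet u)) (insert v (G.neighborSet v))

/-! Twice the indicator of a dominating set is a Roman dominating function, so `γ_R ≤ 2γ`.
Conversely, a Roman dominating function without the value 1 is twice the indicator of its
set `A_2`, which is then dominating; its weight `2|A_2|` is thus at least `2γ`. -/

section

variable {V : Type*} {G : SimpleGraph V}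

lemma IsDominatingSet.isRDF_ite [DecidableEq V] {S : Finset V} (hS : IsDominatingSet G ↑S) :
    IsRDF G (fun v => if v ∈ S then 2 else 0) := by
  refine ⟨fun v => by dsimp only; split_ifs <;> omega, fun v hv => ?_⟩
  obtain ⟨u, hu, hadj⟩ := hS v (by simpa using hv)
  exact ⟨u, hadj, if_pos hu⟩

lemma sum_ite_two_zero [Fintype V] (p : V → Prop) [DecidablePred p] :
    ∑ v, (if p v then 2 else 0) = 2 * #{v | p v} := by
  rw [sum_ite, sum_const_zero, add_zero, sum_const, smul_eq_mul, mul_comm]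

lemma sum_ite_mem_two_zero [Fintype V] [DecidableEq V] (S : Finset V) :
    ∑ v, (if v ∈ S then 2 else 0) = 2 * #S := by
  rw [sum_ite_two_zero, filter_mem_eq_inter, univ_inter]

lemma exists_isDominatingSet_card_eq_domNum [Fintype V] (G : SimpleGraph V) :
    ∃ S : Finset V, IsDominatingSet G ↑S ∧ #S = domNum G :=
  Nat.sInf_mem (s := {n | ∃ S : Finset V, IsDominatingSet G ↑S ∧ #S = n})
    ⟨_, univ, fun v hv => absurd (mem_coe.2 (mem_univ v)) hv, rfl⟩

lemma domNum_le_card [Fintype V] {S : Finset V} (hS : IsDominatingSet G ↑S) :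
    domNum G ≤ #S :=
  Nat.sInf_le ⟨S, hS, rfl⟩

lemma romanDomNum_le_two_mul_card [Fintype V] {S : Finset V} (hS : IsDominatingSet G ↑S) :
    romanDomNum G ≤ 2 * #S := by
  classical
  exact Nat.sInf_le ⟨_, hS.isRDF_ite, sum_ite_mem_two_zero S⟩

lemma romanDomNum_le_two_mul_domNum [Fintype V] (G : SimpleGraph V) :
    romanDomNum G ≤ 2 * domNum G := by
  obtain ⟨S, hS, hcard⟩ := exists_isDominatingSet_card_eq_domNum G
  exact hcard ▸ romanDomNum_le_two_mul_card hS

lemma IsRDF.eq_ite_of_ne_one {f : V → ℕ} (hf : IsRDF G f) (h1 : ∀ v, f v ≠ 1) :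
    f = fun v => if f v = 2 then 2 else 0 := by
  funext v
  have := hf.1 v
  have := h1 v
  split_ifs <;> omega

lemma IsRDF.isDominatingSet_filter_eq_two [Fintype V] {f : V → ℕ} (hf : IsRDF G f)
    (h1 : ∀ v, f v ≠ 1) : IsDominatingSet G ↑({v | f v = 2} : Finset V) := by
  intro v hv
  have hv2 : f v ≠ 2 := by simpa using hv
  have hv0 : f v = 0 := by
    have := hf.1 v
    have := h1 v
    omega
  obtain ⟨u, hadj, hu⟩ := hf.2 v hv0
  exact ⟨u, by simpa using hu, hadj⟩

end

theorem stmt12 {V : Type*} [Fintype V] (G : SimpleGraph V) :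
    romanDomNum G = 2 * domNum G ↔
      ∃ f : V → ℕ, IsRDF G f ∧ ∑ v, f v = romanDomNum G ∧ ∀ v, f v ≠ 1 := by
  classical
  constructor
  · intro h
    obtain ⟨S, hS, hcard⟩ := exists_isDominatingSet_card_eq_domNum G
    refine ⟨_, hS.isRDF_ite, ?_, fun v => by split_ifs <;> omega⟩
    rw [sum_ite_mem_two_zero, hcard, h]
  · rintro ⟨f, hf, hsum, h1⟩
    have hS := hf.isDominatingSet_filter_eq_two h1
    have hsum_eq : ∑ v, f v = 2 * #{v | f v = 2} := by
      conv_lhs => rw [hf.eq_ite_of_ne_one h1]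
      exact sum_ite_two_zero _
    refine le_antisymm (romanDomNum_le_two_mul_domNum G) ?_
    calc 2 * domNum G ≤ 2 * #{v | f v = 2} := Nat.mul_le_mul_left 2 (domNum_le_card hS)
      _ = romanDomNum G := by rw [← hsum_eq, hsum]
end

section
/- Let f₁ = (A_0, A_1, A_2) be a minimum-weight Roman dominating function on G and f₂ = (B_0, B_1, B_2) a minimum-weight Roman dominating function on H. Then γ_R(G ⊠ H) ≤ γ_R(G)·γ_R(H) − 2|A_2||B_2|. -/
open Finset

/-!
Multiply the two minimum Roman dominating functions and cap the product at `2`: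
`F (v, w) = min (f₁ v * f₂ w) 2`. A vertex of value `0` has a coordinate of value `0`; moving each
such coordinate to a neighbour of value `2` (and keeping the others) gives a strong-product
neighbour of value `2`, so `F` is a Roman dominating function of `G ⊠ H`. Its weight is that of
`f₁ ⊗ f₂`, namely `γ_R(G) γ_R(H)`, except that each vertex of `A₂ × B₂` drops from `4` to `2`.
-/

section

variable {V W : Type*}

theorem romanDomNum_le_sum [Fintype V] {G : SimpleGraph V} {f : V → ℕ} (hf : IsRDF G f) :
    romanDomNum G ≤ ∑ v, f v :=
  Nat.sInf_le ⟨f, hf, rfl⟩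

theorem IsRDF.exists_self_or_adj_two {G : SimpleGraph V} {f : V → ℕ} (hf : IsRDF G f) (v : V) :
    ∃ u, (u = v ∧ f v ≠ 0) ∨ (G.Adj u v ∧ f u = 2) := by
  by_cases hv : f v = 0
  · obtain ⟨u, hu, hu2⟩ := hf.2 v hv
    exact ⟨u, Or.inr ⟨hu, hu2⟩⟩
  · exact ⟨v, Or.inl ⟨rfl, hv⟩⟩

def cappedProd (f₁ : V → ℕ) (f₂ : W → ℕ) (p : V × W) : ℕ :=
  min (f₁ p.1 * f₂ p.2) 2

theorem IsRDF.strongProd_cappedProd {G : SimpleGraph V} {H : SimpleGraph W} {f₁ : V → ℕ} {f₂ : W → ℕ}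
    (hf₁ : IsRDF G f₁) (hf₂ : IsRDF H f₂) :
    IsRDF (strongProd G H) (cappedProd f₁ f₂) := by
  refine ⟨fun p => min_le_right _ _, ?_⟩
  rintro ⟨v, w⟩ h0
  have h0' : f₁ v = 0 ∨ f₂ w = 0 := by
    simpa only [cappedProd, Nat.min_eq_zero_iff, Nat.mul_eq_zero, OfNat.ofNat_ne_zero,
      or_false] using h0
  obtain ⟨u, hu⟩ := hf₁.exists_self_or_adj_two v
  obtain ⟨x, hx⟩ := hf₂.exists_self_or_adj_two w
  have hu0 : f₁ u ≠ 0 := by rcases hu with ⟨rfl, h⟩ | ⟨-, h⟩ <;> omega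
  have hx0 : f₂ x ≠ 0 := by rcases hx with ⟨rfl, h⟩ | ⟨-, h⟩ <;> omega
  have htwo : f₁ u = 2 ∨ f₂ x = 2 := by
    rcases hu with ⟨-, h⟩ | ⟨-, h⟩ <;> rcases hx with ⟨-, h'⟩ | ⟨-, h'⟩ <;> omega
  have hval : cappedProd f₁ f₂ (u, x) = 2 :=
    min_eq_right <| show 2 ≤ f₁ u * f₂ x by rcases htwo with h | h <;> rw [h] <;> omega
  refine ⟨(u, x), ⟨fun h => ?_, hu.imp And.left And.left, hx.imp And.left And.left⟩, hval⟩
  rw [h] at hval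
  omega

theorem cappedProd_eq {f₁ : V → ℕ} {f₂ : W → ℕ} {v : V} {w : W} (h₁ : f₁ v ≤ 2)
    (h₂ : f₂ w ≤ 2) :
    (cappedProd f₁ f₂ (v, w) : ℤ) =
      f₁ v * f₂ w - 2 * (if f₁ v = 2 then 1 else 0) * (if f₂ w = 2 then 1 else 0) := by
  unfold cappedProd
  interval_cases f₁ v <;> interval_cases f₂ w <;> rfl

theorem sum_cappedProd [Fintype V] [Fintype W] {f₁ : V → ℕ} {f₂ : W → ℕ}
    (h₁ : ∀ v, f₁ v ≤ 2) (h₂ : ∀ w, f₂ w ≤ 2) :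
    (∑ p, cappedProd f₁ f₂ p : ℤ) =
      (∑ v, f₁ v : ℤ) * ∑ w, f₂ w -
        2 * #{v | f₁ v = 2} * #{w | f₂ w = 2} := by
  simp only [Fintype.sum_prod_type, cappedProd_eq (h₁ _) (h₂ _), sum_sub_distrib, card_filter]
  push_cast
  rw [sum_mul_sum, mul_assoc, sum_mul_sum, mul_sum]
  simp only [mul_sum, mul_assoc]

end

theorem stmt17_general {V W : Type*} [Fintype V] [Fintype W]
    (G : SimpleGraph V) (H : SimpleGraph W)
    (f₁ : V → ℕ) (hf₁ : IsRDF G f₁) (hmin₁ : ∑ v, f₁ v = romanDomNum G)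
    (f₂ : W → ℕ) (hf₂ : IsRDF H f₂) (hmin₂ : ∑ w, f₂ w = romanDomNum H) :
    (romanDomNum (strongProd G H) : ℤ) ≤
      (romanDomNum G : ℤ) * romanDomNum H -
        2 * (Finset.univ.filter (fun v => f₁ v = 2)).card *
          (Finset.univ.filter (fun w => f₂ w = 2)).card := by
  calc (romanDomNum (strongProd G H) : ℤ) ≤ ∑ p, (cappedProd f₁ f₂ p : ℤ) := by
        exact_mod_cast romanDomNum_le_sum (hf₁.strongProd_cappedProd hf₂)
    _ = _ := by rw [sum_cappedProd hf₁.1 hf₂.1, ← hmin₁, ← hmin₂]; push_cast; rfl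

theorem stmt17 {V W : Type*} [Fintype V] [Fintype W] [DecidableEq V] [DecidableEq W]
    (G : SimpleGraph V) (H : SimpleGraph W)
    (f₁ : V → ℕ) (hf₁ : IsRDF G f₁) (hmin₁ : ∑ v, f₁ v = romanDomNum G)
    (f₂ : W → ℕ) (hf₂ : IsRDF H f₂) (hmin₂ : ∑ w, f₂ w = romanDomNum H) :
    (romanDomNum (strongProd G H) : ℤ) ≤
      (romanDomNum G : ℤ) * romanDomNum H -
        2 * (Finset.univ.filter (fun v => f₁ v = 2)).card *
          (Finset.univ.filter (fun w => f₂ w = 2)).card :=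
  stmt17_general G H f₁ hf₁ hmin₁ f₂ hf₂ hmin₂
end
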